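/- arXiv:1304.2329 — 3 statements merged into one kernel-verified Lean document; each statement's English description precedes it below -/
import Mathlib

section
/- Vanishing dual variables in the zero-cost case: suppose all costs vanish (c_{ij} = 0 for every (i,j) ∈ E) and there exists a strictly feasible assignment, i.e. a family λ_{ij} ≥ 0 with ∑_{j:(i,j)∈E} λ_{ij} = λ_i for every i and ∑_{i:(i,j)∈E} λ_{ij}/μ_{ij} < N_j for every j. Then every dual pair (v, q) whose dual objective is nonnegative (equivalently, equal to the optimal primal value S(λ) = 0) satisfies q_j = 0 for all j ∈ J. In other words, the optimal dual variables corresponding to the capacity constraints are q*_j = 0. -/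
open Finset

/-- A dual pair `(v, q)`: `q_j ≥ 0` for all `j` and `v_i ≤ c_{ij} + q_j/μ_{ij}`
for all `(i,j) ∈ E`. -/
def DualPair {I J : Type*} (E : Finset (I × J)) (mu : I × J → ℝ) (c : I × J → ℝ)
    (v : I → ℝ) (q : J → ℝ) : Prop :=
  (∀ j, 0 ≤ q j) ∧ (∀ p ∈ E, v p.1 ≤ c p + q p.2 / mu p)

/-- The dual objective `∑_{i∈I} λ_i v_i − ∑_{j∈J} N_j q_j`. -/
def dualObjective {I J : Type*} [Fintype I] [Fintype J]
    (lam : I → ℝ) (N : J → ℝ) (v : I → ℝ) (q : J → ℝ) : ℝ :=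
  ∑ i : I, lam i * v i - ∑ j : J, N j * q j

/-- **Vanishing dual variables in the zero-cost case.** Suppose all costs vanish
(`c_{ij} = 0` on `E`) and there exists a strictly feasible assignment (nonnegative,
supported on `E`, routing all demand, with every capacity constraint strictly satisfied).
Then every dual pair `(v, q)` whose dual objective is nonnegative (equivalently, equal to
the optimal primal value `S(λ) = 0`) satisfies `q_j = 0` for all `j ∈ J`. -/
theorem zero_cost_dual_variables_vanish
    {I J : Type*} [Fintype I] [Fintype J] [Nonempty I] [Nonempty J]
    [DecidableEq I] [DecidableEq J]
    (E : Finset (I × J))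
    (hE : ∀ i : I, ∃ j : J, (i, j) ∈ E)
    (lam : I → ℝ) (hlam : ∀ i, 0 < lam i)
    (N : J → ℝ) (hN : ∀ j, 0 < N j)
    (mu : I × J → ℝ) (hmu : ∀ p ∈ E, 0 < mu p)
    (c : I × J → ℝ) (hc : ∀ p ∈ E, c p = 0)
    (hstrict : ∃ x : I × J → ℝ,
      (∀ p ∈ E, 0 ≤ x p) ∧ (∀ p ∉ E, x p = 0) ∧
      (∀ i, ∑ j : J, x (i, j) = lam i) ∧
      (∀ j, ∑ i : I, x (i, j) / mu (i, j) < N j)) :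
    ∀ (v : I → ℝ) (q : J → ℝ), DualPair E mu c v q →
      0 ≤ dualObjective lam N v q → ∀ j : J, q j = 0 := by
  rintro v q ⟨hq, hvq⟩ hobj j₀
  by_contra hne
  have hq0 : 0 < q j₀ := lt_of_le_of_ne (hq j₀) (Ne.symm hne)
  obtain ⟨x, hx0, hxE, hxrow, hxcol⟩ := hstrict
  -- Step 1: ∑ λ v ≤ ∑_{i,j} x(i,j) q_j / μ
  have h1 : ∑ i : I, lam i * v i ≤ ∑ i : I, ∑ j : J, x (i, j) * (q j / mu (i, j)) := by
    have : ∑ i : I, lam i * v i = ∑ i : I, ∑ j : J, x (i, j) * v i := by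
      refine Finset.sum_congr rfl fun i _ => ?_
      rw [← Finset.sum_mul, hxrow i]
    rw [this]
    refine Finset.sum_le_sum fun i _ => Finset.sum_le_sum fun j _ => ?_
    by_cases hE' : (i, j) ∈ E
    · have := hvq (i, j) hE'
      rw [hc (i, j) hE'] at this
      rw [zero_add] at this
      exact mul_le_mul_of_nonneg_left this (hx0 _ hE')
    · simp [hxE _ hE']
  -- Step 2: rewrite as ∑_j q_j * (∑_i x/μ)
  have h2 : ∑ i : I, ∑ j : J, x (i, j) * (q j / mu (i, j))
      = ∑ j : J, q j * (∑ i : I, x (i, j) / mu (i, j)) := by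
    rw [Finset.sum_comm]
    refine Finset.sum_congr rfl fun j _ => ?_
    rw [Finset.mul_sum]
    refine Finset.sum_congr rfl fun i _ => ?_
    field_simp
  -- Step 3: strict inequality
  have h3 : ∑ j : J, q j * (∑ i : I, x (i, j) / mu (i, j)) < ∑ j : J, N j * q j := by
    have : ∑ j : J, N j * q j = ∑ j : J, q j * N j := by
      refine Finset.sum_congr rfl fun j _ => mul_comm _ _
    rw [this]
    refine Finset.sum_lt_sum (fun j _ => mul_le_mul_of_nonneg_left (le_of_lt (hxcol j)) (hq j))
      ⟨j₀, Finset.mem_univ _, mul_lt_mul_of_pos_left (hxcol j₀) hq0⟩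
  have : dualObjective lam N v q < 0 := by
    unfold dualObjective
    linarith [h1, h2.le, h3]
  linarith
end

section
/- Well-definedness of the load-distribution map H on a forest of basic activities: for every vector v = (v_i)_{i∈I} ∈ ℝ^I there exists a unique family w = (w_{ij})_{(i,j)∈E} ∈ ℝ^E satisfying (i) ∑_{j:(i,j)∈E} w_{ij} = v_i for every i ∈ I, and (ii) z_j(w)/μ_{ij} = z_{j'}(w)/μ_{ij'} for every i ∈ I and every pair of edges (i,j), (i,j') ∈ E, where z_j(w) = ∑_{i':(i',j)∈E} w_{i'j}/μ_{i'j}. (Uniqueness is proved by repeatedly eliminating leaf vertices of the forest: at a leaf edge the variable is either fixed directly by (i) or expressed through (ii).) -/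
/-!
Write `z_j` for the workload of charger `j`. If `w` has zero row sums and satisfies (ii), say
`z_j / μ_ij = c_i` on the edges at `i`, then `∑_j z_j² = ∑_i c_i ∑_j w_ij = 0`, so every workload
vanishes. On a forest, zero row sums and zero workloads force `w = 0`: a leaf edge is the only
term of its row or of its column sum, so it vanishes and can be removed. This gives uniqueness.
With the `c_i` as extra unknowns, (i) and (ii) form a square linear system, which is therefore
also solvable.
-/

open Finset

/-- The workload `z_j(w) = ∑_{i':(i',j)∈E} w_{i'j}/μ_{i'j}` brought to charger type `j`
(for `w` supported on the edge set, this is `∑_{i'} w_{i'j}/μ_{i'j}`). -/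
noncomputable def workload {I J : Type*} [Fintype I] (mu : I × J → ℝ) (w : I × J → ℝ) (j : J) : ℝ :=
  ∑ i : I, w (i, j) / mu (i, j)

theorem SimpleGraph.IsAcyclic.exists_existsUnique_adj {V : Type*} [Finite V] {G : SimpleGraph V}
    (hG : G.IsAcyclic) {a b : V} (hab : G.Adj a b) : ∃ u, ∃! w, G.Adj u w := by
  have : Nonempty V := ⟨a⟩
  obtain ⟨u, v, p, hp, hmax⟩ := Walk.exists_isPath_forall_isPath_length_le_length G
  have hnil : ¬p.Nil := by
    have : 1 ≤ p.length := by simpa using hmax a b (.cons hab .nil) (by simp [hab.ne])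
    rw [← Walk.length_eq_zero_iff]
    omega
  -- The start of a longest path is a leaf: another neighbour would extend the path or close a cycle.
  refine ⟨u, p.snd, p.adj_snd hnil, fun w hadj => hG.eq_snd_of_adj_start hp hadj ?_⟩
  by_contra hw
  simpa using hmax w v (p.cons hadj.symm) (hp.cons hw)

namespace LoadDistribution

variable {I J : Type*}

def bipartiteGraph (E : Finset (I × J)) : SimpleGraph (I ⊕ J) :=
  SimpleGraph.fromRel fun a b => ∃ p ∈ E, a = Sum.inl p.1 ∧ b = Sum.inr p.2

@[simp] theorem bipartiteGraph_adj_inl_inr {E : Finset (I × J)} {i : I} {j : J} :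
    (bipartiteGraph E).Adj (.inl i) (.inr j) ↔ (i, j) ∈ E := by
  simp [bipartiteGraph]

@[simp] theorem bipartiteGraph_adj_inr_inl {E : Finset (I × J)} {i : I} {j : J} :
    (bipartiteGraph E).Adj (.inr j) (.inl i) ↔ (i, j) ∈ E := by
  simp [bipartiteGraph]

@[simp] theorem bipartiteGraph_not_adj_inl_inl {E : Finset (I × J)} {i i' : I} :
    ¬(bipartiteGraph E).Adj (.inl i) (.inl i') := by
  simp [bipartiteGraph]

@[simp] theorem bipartiteGraph_not_adj_inr_inr {E : Finset (I × J)} {j j' : J} :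
    ¬(bipartiteGraph E).Adj (.inr j) (.inr j') := by
  simp [bipartiteGraph]

theorem bipartiteGraph_mono {E F : Finset (I × J)} (h : E ⊆ F) :
    bipartiteGraph E ≤ bipartiteGraph F := by
  rintro (i | j) (i' | j') hadj <;> simp_all [@h _]

theorem exists_leaf_of_isAcyclic [Finite I] [Finite J] {E : Finset (I × J)} (hE : E.Nonempty)
    (hac : (bipartiteGraph E).IsAcyclic) :
    ∃ p ∈ E, (∀ j, (p.1, j) ∈ E → j = p.2) ∨ (∀ i, (i, p.2) ∈ E → i = p.1) := by
  obtain ⟨⟨i, j⟩, hij⟩ := hE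
  obtain ⟨u | u, w, hw, huniq⟩ :=
    hac.exists_existsUnique_adj (bipartiteGraph_adj_inl_inr.mpr hij)
  all_goals rcases w with w | w <;> simp only [bipartiteGraph_not_adj_inl_inl,
    bipartiteGraph_not_adj_inr_inr, bipartiteGraph_adj_inl_inr, bipartiteGraph_adj_inr_inl] at hw
  · exact ⟨(u, w), hw, .inl fun j hj => by simpa using huniq (.inr j) (by simpa using hj)⟩
  · exact ⟨(w, u), hw, .inr fun i hi => by simpa using huniq (.inl i) (by simpa using hi)⟩

noncomputable abbrev extendByZero (E : Finset (I × J)) : (E → ℝ) →ₗ[ℝ] I × J → ℝ :=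
  Function.ExtendByZero.linearMap ℝ Subtype.val

theorem extendByZero_apply_of_mem {E : Finset (I × J)} (u : E → ℝ) {p : I × J} (hp : p ∈ E) :
    extendByZero E u p = u ⟨p, hp⟩ :=
  Subtype.val_injective.extend_apply u 0 ⟨p, hp⟩

theorem extendByZero_apply_of_notMem {E : Finset (I × J)} (u : E → ℝ) {p : I × J} (hp : p ∉ E) :
    extendByZero E u p = 0 :=
  Function.extend_apply' _ _ _ fun ⟨q, hq⟩ => hp (hq ▸ q.2)

variable [Fintype I]

def IsBalanced (E : Finset (I × J)) (mu w : I × J → ℝ) : Prop :=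
  ∀ (i : I) (j j' : J), (i, j) ∈ E → (i, j') ∈ E →
    workload mu w j / mu (i, j) = workload mu w j' / mu (i, j')

theorem workload_sub (mu w w' : I × J → ℝ) (j : J) :
    workload mu (w - w') j = workload mu w j - workload mu w' j := by
  simp only [workload, Pi.sub_apply, sub_div, sum_sub_distrib]

theorem IsBalanced.sub {E : Finset (I × J)} {mu w w' : I × J → ℝ}
    (hw : IsBalanced E mu w) (hw' : IsBalanced E mu w') : IsBalanced E mu (w - w') :=
  fun i j j' hj hj' => by
    rw [workload_sub, workload_sub, sub_div, sub_div, hw i j j' hj hj', hw' i j j' hj hj']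

theorem isBalanced_of_workload_eq_mul {E : Finset (I × J)} {mu w : I × J → ℝ}
    (hmu : ∀ p ∈ E, mu p ≠ 0) (c : I → ℝ) (h : ∀ p ∈ E, workload mu w p.2 = c p.1 * mu p) :
    IsBalanced E mu w := fun i j j' hj hj' => by
  rw [h _ hj, h _ hj', mul_div_cancel_right₀ _ (hmu _ hj), mul_div_cancel_right₀ _ (hmu _ hj')]

variable [Fintype J]

theorem eq_zero_of_forall_sum_eq_zero_of_workload_eq_zero
    {E : Finset (I × J)} (hac : (bipartiteGraph E).IsAcyclic) {mu : I × J → ℝ}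
    (hmu : ∀ p ∈ E, mu p ≠ 0) {w : I × J → ℝ} (hw : ∀ p ∉ E, w p = 0)
    (hrow : ∀ i, ∑ j, w (i, j) = 0) (hcol : ∀ j, workload mu w j = 0) : w = 0 := by
  classical
  induction E using Finset.strongInduction with
  | H E ih =>
  rcases E.eq_empty_or_nonempty with rfl | hne
  · exact funext fun p => hw p (notMem_empty p)
  obtain ⟨⟨a, b⟩, hab, hleaf⟩ := exists_leaf_of_isAcyclic hne hac
  have hw_ab : w (a, b) = 0 := by
    rcases hleaf with hrow_leaf | hcol_leaf
    · rw [← hrow a, sum_eq_single_of_mem b (mem_univ b)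
        fun j _ hj => hw _ fun h => hj (hrow_leaf j h)]
    · have := hcol b
      rwa [workload, sum_eq_single_of_mem a (mem_univ a)
        fun i _ hi => by rw [hw _ fun h => hi (hcol_leaf i h), zero_div],
        div_eq_zero_iff, or_iff_left (hmu _ hab)] at this
  refine ih _ (erase_ssubset hab) (hac.anti (bipartiteGraph_mono (erase_subset _ _)))
    (fun p hp => hmu p (mem_of_mem_erase hp)) fun p hp => ?_
  by_cases h : p = (a, b)
  · exact h ▸ hw_ab
  · exact hw p fun hpE => hp (mem_erase.mpr ⟨h, hpE⟩)

theorem sum_workload_sq (mu w : I × J → ℝ) :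
    ∑ j, workload mu w j ^ 2 = ∑ i, ∑ j, w (i, j) * (workload mu w j / mu (i, j)) := by
  rw [sum_comm]
  refine sum_congr rfl fun j _ => ?_
  rw [sq, workload, sum_mul]
  exact sum_congr rfl fun i _ => by ring

theorem workload_eq_zero_of_isBalanced {E : Finset (I × J)}
    {mu w : I × J → ℝ} (hw : ∀ p ∉ E, w p = 0) (hrow : ∀ i, ∑ j, w (i, j) = 0)
    (hbal : IsBalanced E mu w) (j : J) : workload mu w j = 0 := by
  have hrow_energy : ∀ i, ∑ j, w (i, j) * (workload mu w j / mu (i, j)) = 0 := by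
    intro i
    by_cases hi : ∃ j₀, (i, j₀) ∈ E
    · obtain ⟨j₀, hj₀⟩ := hi
      calc ∑ j, w (i, j) * (workload mu w j / mu (i, j))
          = ∑ j, w (i, j) * (workload mu w j₀ / mu (i, j₀)) := sum_congr rfl fun j _ => by
            by_cases hj : (i, j) ∈ E
            · rw [hbal i j j₀ hj hj₀]
            · rw [hw _ hj, zero_mul, zero_mul]
        _ = 0 := by rw [← sum_mul, hrow i, zero_mul]
    · exact sum_eq_zero fun j _ => by rw [hw _ fun hj => hi ⟨j, hj⟩, zero_mul]
  have henergy : ∑ j, workload mu w j ^ 2 = 0 := by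
    rw [sum_workload_sq]
    exact sum_eq_zero fun i _ => hrow_energy i
  exact pow_eq_zero_iff two_ne_zero |>.mp <|
    (sum_eq_zero_iff_of_nonneg fun j _ => sq_nonneg _).mp henergy j (mem_univ j)

theorem eq_zero_of_isBalanced {E : Finset (I × J)}
    (hac : (bipartiteGraph E).IsAcyclic) {mu w : I × J → ℝ} (hmu : ∀ p ∈ E, mu p ≠ 0)
    (hw : ∀ p ∉ E, w p = 0) (hrow : ∀ i, ∑ j, w (i, j) = 0) (hbal : IsBalanced E mu w) :
    w = 0 :=
  eq_zero_of_forall_sum_eq_zero_of_workload_eq_zero hac hmu hw hrow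
    (workload_eq_zero_of_isBalanced hw hrow hbal)

theorem eq_of_isBalanced {E : Finset (I × J)}
    (hac : (bipartiteGraph E).IsAcyclic) {mu w w' : I × J → ℝ} (hmu : ∀ p ∈ E, mu p ≠ 0)
    (hw : ∀ p ∉ E, w p = 0) (hw' : ∀ p ∉ E, w' p = 0)
    (hrow : ∀ i, ∑ j, w (i, j) = ∑ j, w' (i, j))
    (hbal : IsBalanced E mu w) (hbal' : IsBalanced E mu w') : w = w' :=
  sub_eq_zero.mp <| eq_zero_of_isBalanced hac hmu (fun p hp => by simp [hw p hp, hw' p hp])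
    (fun i => by simp [sum_sub_distrib, hrow i]) (hbal.sub hbal')

/-- Conditions (i) and (ii) as a linear system in the loads on `E` and multipliers `c`, with (ii)
written as `z_j = c_i μ_ij` on the edges. -/
noncomputable def loadSystem (E : Finset (I × J)) (mu : I × J → ℝ) :
    (E → ℝ) × (I → ℝ) →ₗ[ℝ] (I → ℝ) × (E → ℝ) where
  toFun x := (fun i => ∑ j, extendByZero E x.1 (i, j),
    fun p => workload mu (extendByZero E x.1) p.1.2 - x.2 p.1.1 * mu p)
  map_add' x y := by
    ext
    · simp only [map_add, Pi.add_apply, sum_add_distrib, Prod.fst_add]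
    · simp only [map_add, workload, Pi.add_apply, add_div, sum_add_distrib, Prod.fst_add,
        Prod.snd_add]
      ring
  map_smul' a x := by
    ext
    · simp only [map_smul, Pi.smul_apply, smul_eq_mul, ← mul_sum, Prod.smul_fst, RingHom.id_apply]
    · simp only [map_smul, workload, Pi.smul_apply, smul_eq_mul, mul_div_assoc, ← mul_sum,
        Prod.smul_fst, Prod.smul_snd, RingHom.id_apply]
      ring

theorem loadSystem_injective {E : Finset (I × J)}
    (hac : (bipartiteGraph E).IsAcyclic) {mu : I × J → ℝ}
    (hmu : ∀ p ∈ E, mu p ≠ 0) (hE : ∀ i, ∃ j, (i, j) ∈ E) :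
    Function.Injective (loadSystem E mu) := by
  rw [injective_iff_map_eq_zero]
  rintro ⟨u, c⟩ h
  simp only [loadSystem, LinearMap.coe_mk, AddHom.coe_mk, Prod.mk_eq_zero, funext_iff,
    Pi.zero_apply, sub_eq_zero] at h
  obtain ⟨hrow, hworkload⟩ := h
  have hw : extendByZero E u = 0 :=
    eq_zero_of_isBalanced hac hmu (fun p => extendByZero_apply_of_notMem u) hrow
      (isBalanced_of_workload_eq_mul hmu c fun p hp => hworkload ⟨p, hp⟩)
  refine Prod.ext (funext fun p => ?_) (funext fun i => ?_)
  · change u p = 0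
    rw [← extendByZero_apply_of_mem u p.2, hw, Pi.zero_apply]
  · obtain ⟨j, hj⟩ := hE i
    have := hworkload ⟨(i, j), hj⟩
    simp only [hw, workload, Pi.zero_apply, zero_div, sum_const_zero] at this
    exact (mul_eq_zero.mp this.symm).resolve_right (hmu _ hj)

theorem loadSystem_surjective {E : Finset (I × J)}
    (hac : (bipartiteGraph E).IsAcyclic) {mu : I × J → ℝ}
    (hmu : ∀ p ∈ E, mu p ≠ 0) (hE : ∀ i, ∃ j, (i, j) ∈ E) :
    Function.Surjective (loadSystem E mu) :=
  (LinearMap.injective_iff_surjective_of_finrank_eq_finrank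
    (LinearEquiv.prodComm ℝ _ _).finrank_eq).mp (loadSystem_injective hac hmu hE)

theorem exists_isBalanced {E : Finset (I × J)}
    (hac : (bipartiteGraph E).IsAcyclic) {mu : I × J → ℝ}
    (hmu : ∀ p ∈ E, mu p ≠ 0) (hE : ∀ i, ∃ j, (i, j) ∈ E) (v : I → ℝ) :
    ∃ w : I × J → ℝ, (∀ p ∉ E, w p = 0) ∧ (∀ i, ∑ j, w (i, j) = v i) ∧ IsBalanced E mu w := by
  obtain ⟨⟨u, c⟩, h⟩ := loadSystem_surjective hac hmu hE (v, 0)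
  simp only [loadSystem, LinearMap.coe_mk, AddHom.coe_mk, Prod.mk.injEq, funext_iff,
    Pi.zero_apply, sub_eq_zero] at h
  exact ⟨extendByZero E u, fun p => extendByZero_apply_of_notMem u, h.1,
    isBalanced_of_workload_eq_mul hmu c fun p hp => h.2 ⟨p, hp⟩⟩

end LoadDistribution

theorem load_distribution_map_well_defined_general
    {I J : Type*} [Fintype I] [Fintype J]
    (E : Finset (I × J))
    (hE : ∀ i : I, ∃ j : J, (i, j) ∈ E)
    (hforest : (SimpleGraph.fromRel (fun a b : I ⊕ J =>
      ∃ p ∈ E, a = Sum.inl p.1 ∧ b = Sum.inr p.2)).IsAcyclic)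
    (mu : I × J → ℝ) (hmu : ∀ p ∈ E, 0 < mu p) :
    ∀ v : I → ℝ, ∃! w : I × J → ℝ,
      (∀ p ∉ E, w p = 0) ∧
      (∀ i : I, ∑ j : J, w (i, j) = v i) ∧
      (∀ (i : I) (j j' : J), (i, j) ∈ E → (i, j') ∈ E →
        workload mu w j / mu (i, j) = workload mu w j' / mu (i, j')) := by
  have hmu_ne : ∀ p ∈ E, mu p ≠ 0 := fun p hp => (hmu p hp).ne'
  intro v
  obtain ⟨w, hw, hrow, hbal⟩ := LoadDistribution.exists_isBalanced hforest hmu_ne hE v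
  refine ⟨w, ⟨hw, hrow, hbal⟩, fun w' ⟨hw', hrow', hbal'⟩ => ?_⟩
  exact LoadDistribution.eq_of_isBalanced hforest hmu_ne hw' hw
    (fun i => (hrow' i).trans (hrow i).symm) hbal' hbal

/-- **Well-definedness of the load-distribution map `H` on a forest of basic activities.**
Let `E ⊆ I × J` be a set of edges such that the bipartite graph on `I ⊔ J` with edge set `E`
is acyclic, and every `i ∈ I` is incident to at least one edge. Then for every `v ∈ ℝ^I`
there is a *unique* family `w = (w_{ij})_{(i,j)∈E}` (extended by zero off `E`) such that
(i) `∑_{j:(i,j)∈E} w_{ij} = v_i` for every `i`, and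
(ii) `z_j(w)/μ_{ij} = z_{j'}(w)/μ_{ij'}` for every `i` and all edges `(i,j), (i,j') ∈ E`,
where `z_j(w) = ∑_{i':(i',j)∈E} w_{i'j}/μ_{i'j}`. -/
theorem load_distribution_map_well_defined
    {I J : Type*} [Fintype I] [Fintype J] [Nonempty I] [Nonempty J]
    [DecidableEq I] [DecidableEq J]
    (E : Finset (I × J))
    (hE : ∀ i : I, ∃ j : J, (i, j) ∈ E)
    (hforest : (SimpleGraph.fromRel (fun a b : I ⊕ J =>
      ∃ p ∈ E, a = Sum.inl p.1 ∧ b = Sum.inr p.2)).IsAcyclic)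
    (mu : I × J → ℝ) (hmu : ∀ p ∈ E, 0 < mu p) :
    ∀ v : I → ℝ, ∃! w : I × J → ℝ,
      (∀ p ∉ E, w p = 0) ∧
      (∀ i : I, ∑ j : J, w (i, j) = v i) ∧
      (∀ (i : I) (j j' : J), (i, j) ∈ E → (i, j') ∈ E →
        workload mu w j / mu (i, j) = workload mu w j' / mu (i, j')) :=
  load_distribution_map_well_defined_general E hE hforest mu hmu
end

section
/- For sufficiently large weight, the load-balancing LP minimizes the maximal load: consider the load-balancing LP with a single cluster containing all charger types and weight W > 0, and suppose at least one feasible assignment exists. Let ρ_min denote the minimum, over all feasible assignments λ, of the maximal load max_{j∈J} ∑_{i:(i,j)∈E} λ_{ij}/(N_j μ_{ij}). Then there exists W₀ ≥ 0 such that for every W > W₀, every optimal solution (λ*, ρ*) of the load-balancing LP satisfies ρ* = ρ_min. -/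
open Finset

/-- A feasible assignment for the stability LP. -/
def FeasibleAssignment {I J : Type*} [Fintype I] [Fintype J]
    (E : Finset (I × J)) (lam : I → ℝ) (N : J → ℝ) (mu : I × J → ℝ)
    (x : I × J → ℝ) : Prop :=
  (∀ p ∈ E, 0 ≤ x p) ∧ (∀ p ∉ E, x p = 0) ∧
  (∀ i, ∑ j : J, x (i, j) = lam i) ∧
  (∀ j, ∑ i : I, x (i, j) / mu (i, j) ≤ N j)

/-- The load `∑_{i:(i,j)∈E} λ_{ij}/(N_j μ_{ij})` of charger type `j` under assignment `x`
(for `x` supported on `E`). -/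
noncomputable def chargerLoad {I J : Type*} [Fintype I]
    (N : J → ℝ) (mu : I × J → ℝ) (x : I × J → ℝ) (j : J) : ℝ :=
  ∑ i : I, x (i, j) / (N j * mu (i, j))

/-- The maximal load `max_{j ∈ J} ∑_{i:(i,j)∈E} λ_{ij}/(N_j μ_{ij})` of an assignment. -/
noncomputable def maxLoad {I J : Type*} [Fintype I] [Fintype J] [Nonempty J]
    (N : J → ℝ) (mu : I × J → ℝ) (x : I × J → ℝ) : ℝ :=
  Finset.univ.sup' Finset.univ_nonempty (chargerLoad N mu x)

open Set Filter Topology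

/-! The feasible pairs `(λ, ρ)` with `ρ ≤ 1` form a compact polytope: the capacity constraints
already force every load to be at most `1`. A polytope has finitely many vertices, so the values
of `ρ` at the vertices are separated by a gap `ε > 0`. Once `W ε` exceeds the oscillation of the
cost on the polytope, no vertex of the face of minimisers of `cost + W ρ` can have a non-minimal
`ρ`, since a vertex with smaller `ρ` would have a smaller objective. By Krein–Milman that face is
the closed convex hull of its vertices, so every optimal solution has `ρ = ρ_min`. -/

def IsPolyhedral {M : Type*} [AddCommGroup M] [Module ℝ M] [TopologicalSpace M] (s : Set M) :
    Prop :=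
  ∃ C : Set (StrongDual ℝ M × ℝ), C.Finite ∧ s = {x | ∀ c ∈ C, c.1 x ≤ c.2}

namespace IsPolyhedral

variable {M : Type*} [AddCommGroup M] [Module ℝ M] [TopologicalSpace M] {s t : Set M}

theorem _root_.isPolyhedral_halfSpace_le (f : StrongDual ℝ M) (b : ℝ) :
    IsPolyhedral {x | f x ≤ b} :=
  ⟨{(f, b)}, finite_singleton _, by simp⟩

theorem inter (hs : IsPolyhedral s) (ht : IsPolyhedral t) : IsPolyhedral (s ∩ t) := by
  obtain ⟨C, hC, rfl⟩ := hs
  obtain ⟨D, hD, rfl⟩ := ht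
  refine ⟨C ∪ D, hC.union hD, ?_⟩
  ext x
  simp only [mem_inter_iff, mem_ofPred_eq, mem_union, or_imp, forall_and]

theorem iInter {ι : Sort*} [Finite ι] {s : ι → Set M} (hs : ∀ i, IsPolyhedral (s i)) :
    IsPolyhedral (⋂ i, s i) := by
  choose C hC hsC using hs
  refine ⟨⋃ i, C i, finite_iUnion hC, ?_⟩
  ext x
  simp only [mem_iInter, hsC, mem_ofPred_eq, mem_iUnion, forall_exists_index]
  exact forall_comm

theorem _root_.isPolyhedral_hyperplane (f : StrongDual ℝ M) (b : ℝ) :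
    IsPolyhedral {x | f x = b} := by
  convert (isPolyhedral_halfSpace_le f b).inter (isPolyhedral_halfSpace_le (-f) (-b)) using 1
  ext x
  simp [le_antisymm_iff]

theorem convex (hs : IsPolyhedral s) : Convex ℝ s := by
  obtain ⟨C, -, rfl⟩ := hs
  simp only [ofPred_forall]
  exact convex_iInter₂ fun c _ => convex_halfSpace_le c.1.isLinear c.2

theorem isClosed [IsTopologicalAddGroup M] (hs : IsPolyhedral s) : IsClosed s := by
  obtain ⟨C, -, rfl⟩ := hs
  simp only [ofPred_forall]
  exact isClosed_biInter fun c _ => isClosed_le c.1.continuous continuous_const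

/-- Extreme points are determined by their sets of active constraints. -/
theorem extremePoints_finite (hs : IsPolyhedral s) : (s.extremePoints ℝ).Finite := by
  obtain ⟨C, hC, rfl⟩ := hs
  refine Finite.of_finite_image (f := fun x => {c ∈ C | c.1 x = c.2})
    (hC.powerset.subset ?_) ?_
  · rintro _ ⟨x, -, rfl⟩
    exact sep_subset _ _
  intro x hx y hy hxy
  have hx' := mem_extremePoints.1 hx
  have hline : ∀ᶠ t in 𝓝 (0 : ℝ), ∀ c ∈ C, c.1 (x + t • (x - y)) ≤ c.2 := by
    refine (eventually_all_finite hC).2 fun c hc => ?_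
    simp only [map_add, map_smul, map_sub, smul_eq_mul]
    rcases (hx'.1 c hc).eq_or_lt with hact | hinact
    · have hcy : c.1 y = c.2 := ((Set.ext_iff.1 hxy c).1 ⟨hc, hact⟩).2
      simp [hact, hcy]
    · refine (ContinuousAt.eventually_lt (f := fun t => c.1 x + t * (c.1 x - c.1 y))
        (by fun_prop) continuousAt_const (by simpa using hinact)).mono fun _ => le_of_lt
  have hline' := (continuous_neg.tendsto' (0 : ℝ) 0 neg_zero).eventually hline
  obtain ⟨ε, ⟨hplus, hminus⟩, hε⟩ :=
    ((hline.and hline').filter_mono nhdsWithin_le_nhds |>.and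
      (self_mem_nhdsWithin (s := Ioi (0 : ℝ)))).exists
  have hseg := mem_openSegment_add_sub (𝕜 := ℝ) x (ε • (x - y))
  rw [neg_smul, ← sub_eq_add_neg] at hminus
  have hxε := (hx'.2 _ hplus _ hminus hseg).1
  rw [add_eq_left, smul_eq_zero, sub_eq_zero] at hxε
  exact hxε.resolve_left hε.ne'

end IsPolyhedral

theorem Set.Finite.exists_pos_add_le_of_lt {t : Set ℝ} (ht : t.Finite) :
    ∃ ε > 0, ∀ a ∈ t, ∀ b ∈ t, a < b → a + ε ≤ b := by
  have hgap : ∀ᶠ ε in 𝓝 (0 : ℝ), ∀ a ∈ t, ∀ b ∈ t, a < b → a + ε ≤ b := by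
    refine (eventually_all_finite ht).2 fun a _ => (eventually_all_finite ht).2 fun b _ => ?_
    by_cases hab : a < b
    · filter_upwards [eventually_le_nhds (sub_pos.2 hab)] with ε hε _
      linarith
    · simp [hab]
  obtain ⟨ε, hε, hεgap⟩ := (eventually_mem_nhdsWithin.and
    (hgap.filter_mono nhdsWithin_le_nhds)).exists (f := 𝓝[>] (0 : ℝ))
  exact ⟨ε, hε, hεgap⟩

section Penalty

variable {V : Type*} [AddCommGroup V] [Module ℝ V] [TopologicalSpace V] [T2Space V]
  [IsTopologicalAddGroup V] [ContinuousSMul ℝ V] [LocallyConvexSpace ℝ V] {S : Set V}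

theorem IsCompact.subset_of_extremePoints_subset {t : Set V} (hS : IsCompact S)
    (hSc : Convex ℝ S) (ht : IsClosed t) (htc : Convex ℝ t) (hext : S.extremePoints ℝ ⊆ t) :
    S ⊆ t := by
  rw [← closure_convexHull_extremePoints hS hSc]
  exact closure_minimal (convexHull_min hext htc) ht

theorem IsCompact.exists_isMinOn_of_isMinOn_add_smul (hS : IsCompact S) (hSc : Convex ℝ S)
    (hext : (S.extremePoints ℝ).Finite) (h g : StrongDual ℝ V) :
    ∃ W₀ : ℝ, 0 ≤ W₀ ∧ ∀ W : ℝ, W₀ < W → ∀ z ∈ S, IsMinOn (h + W • g) S z → IsMinOn g S z := by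
  obtain ⟨ε, hε, hgap⟩ := (hext.image g).exists_pos_add_le_of_lt
  obtain ⟨C, hC⟩ := hS.exists_bound_of_continuousOn h.continuous.continuousOn
  have hC' (x : V) (hx : x ∈ S) : |h x| ≤ |C| := (hC x hx).trans (le_abs_self C)
  have hW₀ : 0 ≤ 2 * |C| / ε := by positivity
  refine ⟨2 * |C| / ε, hW₀, fun W hW z hz hmin => ?_⟩
  have hW0 : 0 ≤ W := hW₀.trans hW.le
  have hWε : 2 * |C| < W * ε := (div_lt_iff₀ hε).1 hW
  set F := -(h + W • g)
  have hM : IsExposed ℝ S (F.toExposed S) := ContinuousLinearMap.toExposed.isExposed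
  have hzM : z ∈ F.toExposed S := ⟨hz, fun y hy => neg_le_neg (hmin hy)⟩
  have hvert : ∀ v ∈ (F.toExposed S).extremePoints ℝ, ∀ u ∈ S.extremePoints ℝ, g v ≤ g u := by
    intro v hv u hu
    by_contra! hlt
    have hvS := hM.isExtreme.extremePoints_subset_extremePoints hv
    have hεuv := hgap _ ⟨u, hu, rfl⟩ _ ⟨v, hvS, rfl⟩ hlt
    have hFvu : h v + W * g v ≤ h u + W * g u := by
      have := (extremePoints_subset hv).2 u (extremePoints_subset hu)
      simp only [F, neg_apply, add_apply, smul_apply, smul_eq_mul] at this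
      linarith
    have hCu := abs_le.1 (hC' u (extremePoints_subset hu))
    have hCv := abs_le.1 (hC' v (extremePoints_subset hvS))
    linarith [mul_le_mul_of_nonneg_left hεuv hW0]
  intro y hy
  refine (hM.isCompact hS).subset_of_extremePoints_subset (hM.convex hSc)
    (isClosed_le g.continuous continuous_const) (convex_halfSpace_le g.isLinear _)
    (fun v hv => ?_) hzM
  exact hS.subset_of_extremePoints_subset hSc (isClosed_le continuous_const g.continuous)
    (convex_halfSpace_ge g.isLinear _) (hvert v hv) hy

end Penalty

def fstCoord {ι : Type*} (p : ι) : StrongDual ℝ ((ι → ℝ) × ℝ) :=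
  (ContinuousLinearMap.proj p).comp (ContinuousLinearMap.fst ℝ (ι → ℝ) ℝ)

@[simp]
theorem fstCoord_apply {ι : Type*} (p : ι) (v : (ι → ℝ) × ℝ) : fstCoord p v = v.1 p := rfl

section LoadBalancing

variable {I J : Type*} [Fintype I] [Fintype J] {E : Finset (I × J)} {lam : I → ℝ}
  {N : J → ℝ} {mu : I × J → ℝ} {x : I × J → ℝ}

namespace FeasibleAssignment

theorem nonneg (hx : FeasibleAssignment E lam N mu x) (p : I × J) : 0 ≤ x p := by
  by_cases hp : p ∈ E
  · exact hx.1 p hp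
  · exact (hx.2.1 p hp).ge

theorem le_lam (hx : FeasibleAssignment E lam N mu x) (p : I × J) : x p ≤ lam p.1 := by
  rw [← hx.2.2.1 p.1]
  exact Finset.single_le_sum (fun j _ => hx.nonneg (p.1, j)) (Finset.mem_univ p.2)

theorem chargerLoad_nonneg (hx : FeasibleAssignment E lam N mu x) (hN : ∀ j, 0 < N j)
    (hmu : ∀ p ∈ E, 0 < mu p) (j : J) : 0 ≤ chargerLoad N mu x j :=
  Finset.sum_nonneg fun i _ => by
    by_cases hp : (i, j) ∈ E
    · exact div_nonneg (hx.1 _ hp) (mul_pos (hN j) (hmu _ hp)).le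
    · simp [hx.2.1 _ hp]

theorem chargerLoad_le_one (hx : FeasibleAssignment E lam N mu x) (hN : ∀ j, 0 < N j) (j : J) :
    chargerLoad N mu x j ≤ 1 := by
  have hload : chargerLoad N mu x j = (∑ i, x (i, j) / mu (i, j)) / N j := by
    simp only [chargerLoad, Finset.sum_div, div_div, mul_comm]
  rw [hload, div_le_one (hN j)]
  exact hx.2.2.2 j

end FeasibleAssignment

theorem maxLoad_le_iff [Nonempty J] {r : ℝ} :
    maxLoad N mu x ≤ r ↔ ∀ j, chargerLoad N mu x j ≤ r := by
  simp [maxLoad]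

def truncatedLPRegion (E : Finset (I × J)) (lam : I → ℝ) (N : J → ℝ) (mu : I × J → ℝ) :
    Set ((I × J → ℝ) × ℝ) :=
  {v | FeasibleAssignment E lam N mu v.1 ∧ (∀ j, chargerLoad N mu v.1 j ≤ v.2) ∧ v.2 ≤ 1}

theorem FeasibleAssignment.mem_truncatedLPRegion [Nonempty J]
    (hx : FeasibleAssignment E lam N mu x) (hN : ∀ j, 0 < N j) :
    (x, maxLoad N mu x) ∈ truncatedLPRegion E lam N mu :=
  ⟨hx, maxLoad_le_iff.1 le_rfl, maxLoad_le_iff.2 (hx.chargerLoad_le_one hN)⟩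

theorem isPolyhedral_truncatedLPRegion : IsPolyhedral (truncatedLPRegion E lam N mu) := by
  let ρ : StrongDual ℝ ((I × J → ℝ) × ℝ) := ContinuousLinearMap.snd ℝ (I × J → ℝ) ℝ
  have hρ (v : (I × J → ℝ) × ℝ) : ρ v = v.2 := rfl
  simp only [truncatedLPRegion, FeasibleAssignment, chargerLoad, ofPred_and, ofPred_forall]
  refine ((IsPolyhedral.iInter fun p => .iInter fun _ => ?_).inter
    ((IsPolyhedral.iInter fun p => .iInter fun _ => ?_).inter
    ((IsPolyhedral.iInter fun i => ?_).inter (IsPolyhedral.iInter fun j => ?_)))).inter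
    ((IsPolyhedral.iInter fun j => ?_).inter ?_)
  · simpa using isPolyhedral_halfSpace_le (-fstCoord p) 0
  · simpa using isPolyhedral_hyperplane (fstCoord p) 0
  · simpa using isPolyhedral_hyperplane (∑ j, fstCoord (i, j)) (lam i)
  · simpa [div_eq_inv_mul] using
      isPolyhedral_halfSpace_le (∑ i, (mu (i, j))⁻¹ • fstCoord (i, j)) (N j)
  · simpa [hρ, div_eq_inv_mul, sub_nonpos] using
      isPolyhedral_halfSpace_le (∑ i, (N j * mu (i, j))⁻¹ • fstCoord (i, j) - ρ) 0
  · exact isPolyhedral_halfSpace_le ρ 1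

theorem isCompact_truncatedLPRegion [Nonempty J] (hN : ∀ j, 0 < N j) (hmu : ∀ p ∈ E, 0 < mu p) :
    IsCompact (truncatedLPRegion E lam N mu) := by
  refine ((isCompact_univ_pi fun p => isCompact_Icc (a := 0) (b := lam p.1)).prod
    (isCompact_Icc (a := 0) (b := 1))).of_isClosed_subset isPolyhedral_truncatedLPRegion.isClosed ?_
  rintro v ⟨hv, hload, hv1⟩
  exact ⟨fun p _ => ⟨hv.nonneg p, hv.le_lam p⟩,
    (hv.chargerLoad_nonneg hN hmu (Classical.arbitrary J)).trans (hload _), hv1⟩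

end LoadBalancing

theorem load_balancing_lp_minimizes_max_load_general
    {I J : Type*} [Fintype I] [Fintype J] [Nonempty J]
    (E : Finset (I × J))
    (lam : I → ℝ)
    (N : J → ℝ) (hN : ∀ j, 0 < N j)
    (mu : I × J → ℝ) (hmu : ∀ p ∈ E, 0 < mu p)
    (c : I × J → ℝ) :
    ∃ W₀ : ℝ, 0 ≤ W₀ ∧ ∀ W : ℝ, W₀ < W →
      ∀ (xstar : I × J → ℝ) (rhostar : ℝ),
        (FeasibleAssignment E lam N mu xstar ∧
          ∀ j : J, chargerLoad N mu xstar j ≤ rhostar) →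
        (∀ (x : I × J → ℝ) (rho : ℝ),
          (FeasibleAssignment E lam N mu x ∧ ∀ j : J, chargerLoad N mu x j ≤ rho) →
          (∑ p ∈ E, xstar p * c p) + W * rhostar ≤ (∑ p ∈ E, x p * c p) + W * rho) →
        rhostar = sInf (maxLoad N mu '' {x | FeasibleAssignment E lam N mu x}) := by
  obtain ⟨W₀, hW₀, hpenalty⟩ :=
    (isCompact_truncatedLPRegion hN hmu).exists_isMinOn_of_isMinOn_add_smul
      isPolyhedral_truncatedLPRegion.convex isPolyhedral_truncatedLPRegion.extremePoints_finite
      (∑ p ∈ E, c p • fstCoord p) (ContinuousLinearMap.snd ℝ (I × J → ℝ) ℝ)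
  refine ⟨W₀, hW₀, fun W hW xstar rhostar ⟨hxstar, hloads⟩ hopt => ?_⟩
  have hobjective (v : (I × J → ℝ) × ℝ) :
      ((∑ p ∈ E, c p • fstCoord p) + W • ContinuousLinearMap.snd ℝ (I × J → ℝ) ℝ) v =
        ∑ p ∈ E, v.1 p * c p + W * v.2 := by
    simp [mul_comm]
  have hrho : rhostar = maxLoad N mu xstar := by
    refine le_antisymm ?_ (maxLoad_le_iff.2 hloads)
    have hW : 0 < W := hW₀.trans_lt hW
    have := hopt xstar (maxLoad N mu xstar) ⟨hxstar, maxLoad_le_iff.1 le_rfl⟩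
    exact le_of_mul_le_mul_left (by linarith) hW
  have hmem : (xstar, rhostar) ∈ truncatedLPRegion E lam N mu :=
    hrho ▸ hxstar.mem_truncatedLPRegion hN
  have hmin := hpenalty W hW _ hmem <| isMinOn_iff.2 fun v hv => by
    simpa only [hobjective] using hopt v.1 v.2 ⟨hv.1, hv.2.1⟩
  subst hrho
  symm
  refine IsLeast.csInf_eq ⟨mem_image_of_mem _ hxstar, ?_⟩
  rintro _ ⟨x, hx, rfl⟩
  exact isMinOn_iff.1 hmin _ (hx.mem_truncatedLPRegion hN)

/-- **For sufficiently large weight, the load-balancing LP minimizes the maximal load.**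
Consider the load-balancing LP with a single cluster containing all charger types and
weight `W > 0`: minimize `∑_{(i,j)∈E} λ_{ij} c_{ij} + W ρ` over feasible assignments `λ`
and reals `ρ` with `ρ ≥ load_j(λ)` for every `j`. If at least one feasible assignment
exists and `ρ_min` is the infimum over feasible assignments of the maximal load, then
there is a `W₀ ≥ 0` such that for every `W > W₀`, every optimal solution `(λ*, ρ*)`
satisfies `ρ* = ρ_min`. -/
theorem load_balancing_lp_minimizes_max_load
    {I J : Type*} [Fintype I] [Fintype J] [Nonempty I] [Nonempty J]
    [DecidableEq I] [DecidableEq J]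
    (E : Finset (I × J))
    (hE : ∀ i : I, ∃ j : J, (i, j) ∈ E)
    (lam : I → ℝ) (hlam : ∀ i, 0 < lam i)
    (N : J → ℝ) (hN : ∀ j, 0 < N j)
    (mu : I × J → ℝ) (hmu : ∀ p ∈ E, 0 < mu p)
    (c : I × J → ℝ) (hc : ∀ p ∈ E, 0 ≤ c p)
    (hfeas : ∃ x : I × J → ℝ, FeasibleAssignment E lam N mu x) :
    ∃ W₀ : ℝ, 0 ≤ W₀ ∧ ∀ W : ℝ, W₀ < W →
      ∀ (xstar : I × J → ℝ) (rhostar : ℝ),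
        (FeasibleAssignment E lam N mu xstar ∧
          ∀ j : J, chargerLoad N mu xstar j ≤ rhostar) →
        (∀ (x : I × J → ℝ) (rho : ℝ),
          (FeasibleAssignment E lam N mu x ∧ ∀ j : J, chargerLoad N mu x j ≤ rho) →
          (∑ p ∈ E, xstar p * c p) + W * rhostar ≤ (∑ p ∈ E, x p * c p) + W * rho) →
        rhostar = sInf (maxLoad N mu '' {x | FeasibleAssignment E lam N mu x}) :=
  load_balancing_lp_minimizes_max_load_general E lam N hN mu hmu c
end
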